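/- arXiv:1409.1420 — 3 statements merged into one kernel-verified Lean document; each statement's English description precedes it below -/
import Mathlib

section
/- For every n > 4, the number r(n) of unlabelled rooted trees on n nodes satisfies r(n) > 2^{n-2}. -/
/-- A rooted tree on the labelled vertex set `Fin n`: a parent function fixing the
root, such that every vertex reaches the root by iterating the parent map. -/
structure RootedTreeOn (n : ℕ) where
  parent : Fin n → Fin n
  root : Fin n
  root_fixed : parent root = root
  reaches_root : ∀ v, ∃ k, parent^[k] v = root

/-- Isomorphism of rooted trees: a bijection of vertices preserving the root and
the parent relation. -/
def RootedTreeOn.Iso {n : ℕ} (T T' : RootedTreeOn n) : Prop :=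
  ∃ σ : Equiv.Perm (Fin n), σ T.root = T'.root ∧ ∀ v, σ (T.parent v) = T'.parent (σ v)

def rootedTreeSetoid (n : ℕ) : Setoid (RootedTreeOn n) where
  r := RootedTreeOn.Iso
  iseqv := by
    constructor
    · intro T
      exact ⟨Equiv.refl _, rfl, fun v => rfl⟩
    · rintro T T' ⟨σ, hr, hp⟩
      refine ⟨σ.symm, by rw [← hr, Equiv.symm_apply_apply], fun v => ?_⟩
      have h := hp (σ.symm v)
      rw [Equiv.apply_symm_apply] at h
      rw [← h, Equiv.symm_apply_apply]
    · rintro T T' T'' ⟨σ, hr, hp⟩ ⟨τ, hr', hp'⟩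
      exact ⟨σ.trans τ, by simp [Equiv.trans_apply, hr, hr'], fun v => by
        simp [Equiv.trans_apply, hp v, hp' (σ v)]⟩

/-- The number of unlabelled rooted trees on `n` nodes (isomorphism classes of
rooted trees), OEIS A000081. -/
noncomputable def numUnlabelledRootedTrees (n : ℕ) : ℕ :=
  Nat.card (Quotient (rootedTreeSetoid n))

namespace RTAux
open Finset

/-! ### the depth-increment function -/

def db (b : ℕ → Bool) (j : ℕ) : ℕ :=
  if j = 0 then 0 else 1 + ((Finset.Ico 1 j).filter (fun i => b i)).card

lemma db_zero (b : ℕ → Bool) : db b 0 = 0 := rfl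

lemma db_one (b : ℕ → Bool) : db b 1 = 1 := by simp [db]

lemma db_eq_zero_iff (b : ℕ → Bool) {j : ℕ} : db b j = 0 ↔ j = 0 := by
  unfold db; split_ifs with h <;> simp [h] <;> omega

lemma db_succ (b : ℕ → Bool) {j : ℕ} (h : 1 ≤ j) :
    db b (j + 1) = db b j + (if b j then 1 else 0) := by
  have hins : Finset.Ico 1 (j + 1) = insert j (Finset.Ico 1 j) := by
    rw [Nat.Ico_succ_right_eq_insert_Ico h]
  unfold db
  rw [if_neg (by omega), if_neg (by omega), hins, Finset.filter_insert]
  split_ifs with hb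
  · rw [Finset.card_insert_of_notMem (by simp)]; omega
  · omega

lemma db_mono (b : ℕ → Bool) : Monotone (db b) := by
  apply monotone_nat_of_le_succ
  intro j
  rcases Nat.eq_zero_or_pos j with rfl | hj
  · simp [db]
  · rw [db_succ b hj]; split_ifs <;> omega

lemma db_exists (b : ℕ → Bool) : ∀ j k, k ≤ db b j → ∃ i ≤ j, db b i = k := by
  intro j
  induction j with
  | zero => intro k hk; exact ⟨0, le_refl _, by simpa [db_zero] using (Nat.le_zero.mp hk).symm ▸ rfl⟩
  | succ j ih =>
    intro k hk
    rcases Nat.eq_zero_or_pos j with rfl | hj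
    · rw [db_one] at hk
      interval_cases k
      · exact ⟨0, by omega, db_zero b⟩
      · exact ⟨1, le_refl _, db_one b⟩
    · rw [db_succ b hj] at hk
      by_cases h : k ≤ db b j
      · obtain ⟨i, hi, hdi⟩ := ih k h
        exact ⟨i, by omega, hdi⟩
      · refine ⟨j + 1, le_refl _, ?_⟩
        rw [db_succ b hj]
        split_ifs at hk ⊢ <;> omega

/-! ### the parent function -/

noncomputable def parentN (b : ℕ → Bool) (j : ℕ) : ℕ :=
  sInf {i | db b i = db b j - 1}

lemma parentN_le (b : ℕ → Bool) (j : ℕ) : parentN b j ≤ j := by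
  obtain ⟨i, hi, hdi⟩ := db_exists b j (db b j - 1) (Nat.sub_le _ _)
  exact le_trans (Nat.sInf_le hdi) hi

lemma db_parentN (b : ℕ → Bool) (j : ℕ) : db b (parentN b j) = db b j - 1 := by
  obtain ⟨i, _, hdi⟩ := db_exists b j (db b j - 1) (Nat.sub_le _ _)
  have hne : {i | db b i = db b j - 1}.Nonempty := ⟨i, hdi⟩
  exact Nat.sInf_mem hne

lemma parentN_zero_of (b : ℕ → Bool) {j : ℕ} (h : db b j ≤ 1) : parentN b j = 0 := by
  have h0 : db b 0 = db b j - 1 := by rw [db_zero]; omega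
  exact Nat.le_zero.mp (Nat.sInf_le h0)

lemma parentN_iter_zero (b : ℕ → Bool) : ∀ t j, db b j = t → (parentN b)^[t] j = 0 := by
  intro t
  induction t with
  | zero => intro j hj; simpa using (db_eq_zero_iff b).mp hj
  | succ t ih =>
    intro j hj
    rw [Function.iterate_succ_apply]
    exact ih _ (by rw [db_parentN]; omega)

lemma db_le_of_iter_zero (b : ℕ → Bool) : ∀ k j, (parentN b)^[k] j = 0 → db b j ≤ k := by
  intro k
  induction k with
  | zero => intro j hj; simp at hj; simp [hj, db_zero]
  | succ k ih =>
    intro j hj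
    rw [Function.iterate_succ_apply] at hj
    have := ih _ hj
    have h2 := db_parentN b j
    omega

/-! ### the tree of a bit sequence -/

noncomputable def treeOf {n : ℕ} (hn : 0 < n) (b : ℕ → Bool) : RootedTreeOn n where
  parent v := ⟨parentN b v.val, lt_of_le_of_lt (parentN_le b v.val) v.isLt⟩
  root := ⟨0, hn⟩
  root_fixed := by
    apply Fin.ext
    simpa using parentN_zero_of b (by simp [db_zero])
  reaches_root := by
    have coe : ∀ (k : ℕ) (v : Fin n),
        (((fun v : Fin n => (⟨parentN b v.val, lt_of_le_of_lt (parentN_le b v.val) v.isLt⟩ : Fin n))^[k] v) : Fin n).val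
        = (parentN b)^[k] v.val := by
      intro k
      induction k with
      | zero => intro v; rfl
      | succ k ih => intro v; rw [Function.iterate_succ_apply, Function.iterate_succ_apply]; exact ih _
    intro v
    refine ⟨db b v.val, Fin.ext ?_⟩
    rw [coe]
    exact parentN_iter_zero b _ _ rfl

lemma treeOf_parent_val {n : ℕ} (hn : 0 < n) (b : ℕ → Bool) (v : Fin n) :
    ((treeOf hn b).parent v).val = parentN b v.val := rfl

lemma treeOf_iter_val {n : ℕ} (hn : 0 < n) (b : ℕ → Bool) (k : ℕ) (v : Fin n) :
    (((treeOf hn b).parent)^[k] v).val = (parentN b)^[k] v.val := by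
  induction k generalizing v with
  | zero => rfl
  | succ k ih => rw [Function.iterate_succ_apply, Function.iterate_succ_apply]; exact ih _

/-! ### depth -/

def depth {n : ℕ} (T : RootedTreeOn n) (v : Fin n) : ℕ := Nat.find (T.reaches_root v)

lemma depth_treeOf {n : ℕ} (hn : 0 < n) (b : ℕ → Bool) (v : Fin n) :
    depth (treeOf hn b) v = db b v.val := by
  unfold depth
  apply le_antisymm
  · apply Nat.find_le
    apply Fin.ext
    rw [treeOf_iter_val]
    exact parentN_iter_zero b _ _ rfl
  · have hspec := Nat.find_spec ((treeOf hn b).reaches_root v)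
    have := congrArg Fin.val hspec
    rw [treeOf_iter_val] at this
    exact db_le_of_iter_zero b _ _ this

/-! ### level counts and iso invariance -/

def cntN (n : ℕ) (d : ℕ → ℕ) (k : ℕ) : ℕ := ((Finset.range n).filter fun j => d j = k).card

def levelCount {n : ℕ} (T : RootedTreeOn n) (k : ℕ) : ℕ :=
  (Finset.univ.filter fun v : Fin n => depth T v = k).card

lemma levelCount_eq {n : ℕ} (T : RootedTreeOn n) (d : ℕ → ℕ)
    (h : ∀ v : Fin n, depth T v = d v.val) (k : ℕ) : levelCount T k = cntN n d k := by
  apply Finset.card_bij (fun v _ => (v : Fin n).val)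
  · intro a ha
    simp only [Finset.mem_filter, Finset.mem_univ, true_and] at ha
    simp only [Finset.mem_filter, Finset.mem_range]
    exact ⟨a.isLt, by rw [← h]; exact ha⟩
  · intro a _ a' _ hh; exact Fin.val_injective hh
  · intro j hj
    simp only [Finset.mem_filter, Finset.mem_range] at hj
    refine ⟨⟨j, hj.1⟩, ?_, rfl⟩
    simp only [Finset.mem_filter, Finset.mem_univ, true_and, h]
    exact hj.2

lemma iter_iso {n : ℕ} {T T' : RootedTreeOn n} (σ : Equiv.Perm (Fin n))
    (hp : ∀ v, σ (T.parent v) = T'.parent (σ v)) :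
    ∀ (k : ℕ) (v : Fin n), σ (T.parent^[k] v) = T'.parent^[k] (σ v) := by
  intro k
  induction k with
  | zero => intro v; rfl
  | succ k ih =>
    intro v
    rw [Function.iterate_succ_apply', Function.iterate_succ_apply', hp, ih]

lemma depth_iso {n : ℕ} {T T' : RootedTreeOn n} (σ : Equiv.Perm (Fin n))
    (hr : σ T.root = T'.root) (hp : ∀ v, σ (T.parent v) = T'.parent (σ v)) (v : Fin n) :
    depth T' (σ v) = depth T v := by
  have key : ∀ k, (T.parent^[k] v = T.root ↔ T'.parent^[k] (σ v) = T'.root) := by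
    intro k
    constructor
    · intro h; rw [← iter_iso σ hp, h, hr]
    · intro h
      apply σ.injective
      rw [iter_iso σ hp, h, hr]
  unfold depth
  exact le_antisymm (Nat.find_le ((key _).mp (Nat.find_spec (T.reaches_root v))))
    (Nat.find_le ((key _).mpr (Nat.find_spec (T'.reaches_root (σ v)))))

lemma levelCount_iso {n : ℕ} {T T' : RootedTreeOn n} (h : T.Iso T') (k : ℕ) :
    levelCount T k = levelCount T' k := by
  obtain ⟨σ, hr, hp⟩ := h
  apply Finset.card_bij (fun v _ => σ v)
  · intro a ha
    simp only [Finset.mem_filter, Finset.mem_univ, true_and] at ha ⊢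
    rw [depth_iso σ hr hp]; exact ha
  · intro a _ a' _ hh; exact σ.injective hh
  · intro v hv
    simp only [Finset.mem_filter, Finset.mem_univ, true_and] at hv ⊢
    refine ⟨σ.symm v, ?_, by simp⟩
    rw [← depth_iso σ hr hp (σ.symm v), Equiv.apply_symm_apply]
    exact hv
/-! ### child counts -/

def childCount {n : ℕ} (T : RootedTreeOn n) (v : Fin n) : ℕ :=
  (Finset.univ.filter fun w : Fin n => T.parent w = v ∧ w ≠ v).card

def branchCount {n : ℕ} (T : RootedTreeOn n) : ℕ :=
  (Finset.univ.filter fun v : Fin n => 2 ≤ childCount T v).card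

lemma childCount_iso {n : ℕ} {T T' : RootedTreeOn n} (σ : Equiv.Perm (Fin n))
    (hp : ∀ v, σ (T.parent v) = T'.parent (σ v)) (v : Fin n) :
    childCount T' (σ v) = childCount T v := by
  symm
  apply Finset.card_bij (fun w _ => σ w)
  · intro w hw
    simp only [Finset.mem_filter, Finset.mem_univ, true_and] at hw ⊢
    refine ⟨by rw [← hp, hw.1], fun hc => hw.2 (σ.injective hc)⟩
  · intro a _ a' _ hh; exact σ.injective hh
  · intro w' hw'
    simp only [Finset.mem_filter, Finset.mem_univ, true_and] at hw'
    refine ⟨σ.symm w', Finset.mem_filter.mpr ⟨Finset.mem_univ _, ?_, ?_⟩, by simp⟩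
    · apply σ.injective
      rw [hp, Equiv.apply_symm_apply, hw'.1]
    · intro hc
      exact hw'.2 (by rw [← hc, Equiv.apply_symm_apply])

lemma branchCount_iso {n : ℕ} {T T' : RootedTreeOn n} (h : T.Iso T') :
    branchCount T = branchCount T' := by
  obtain ⟨σ, hr, hp⟩ := h
  apply Finset.card_bij (fun v _ => σ v)
  · intro v hv
    simp only [Finset.mem_filter, Finset.mem_univ, true_and] at hv ⊢
    rw [childCount_iso σ hp]; exact hv
  · intro a _ a' _ hh; exact σ.injective hh
  · intro v' hv'
    simp only [Finset.mem_filter, Finset.mem_univ, true_and] at hv' ⊢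
    refine ⟨σ.symm v', ?_, by simp⟩
    rw [← childCount_iso σ hp (σ.symm v'), Equiv.apply_symm_apply]
    exact hv'

/-! ### level counts determine a monotone depth function -/

lemma cntLe_eq {n : ℕ} {d d' : ℕ → ℕ} (hc : ∀ k, cntN n d k = cntN n d' k) (k : ℕ) :
    ((Finset.range n).filter fun j => d j ≤ k).card
      = ((Finset.range n).filter fun j => d' j ≤ k).card := by
  simp only [cntN] at hc
  induction k with
  | zero =>
    have h1 : ∀ (e : ℕ → ℕ), ((Finset.range n).filter fun j => e j ≤ 0)
        = ((Finset.range n).filter fun j => e j = 0) := by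
      intro e; apply Finset.filter_congr; intro j _; simp [Nat.le_zero]
    rw [h1, h1]; exact hc 0
  | succ k ih =>
    have h1 : ∀ (e : ℕ → ℕ), ((Finset.range n).filter fun j => e j ≤ k + 1).card
        = ((Finset.range n).filter fun j => e j ≤ k).card
          + ((Finset.range n).filter fun j => e j = k + 1).card := by
      intro e
      rw [← Finset.card_union_of_disjoint]
      · congr 1
        rw [← Finset.filter_or]
        apply Finset.filter_congr
        intro j _
        omega
      · rw [Finset.disjoint_left]
        intro a ha hb
        simp only [Finset.mem_filter] at ha hb
        omega
    rw [h1, h1, ih, hc (k + 1)]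

lemma cnt_det {n : ℕ} {d d' : ℕ → ℕ} (hd : Monotone d) (hd' : Monotone d')
    (hc : ∀ k, cntN n d k = cntN n d' k) {j : ℕ} (hj : j < n) : d j = d' j := by
  have key : ∀ (e e' : ℕ → ℕ), Monotone e → Monotone e' →
      (∀ k, ((Finset.range n).filter fun i => e i ≤ k).card
        = ((Finset.range n).filter fun i => e' i ≤ k).card) → ¬ (e j < e' j) := by
    intro e e' he he' hle hlt
    have h1 : j + 1 ≤ ((Finset.range n).filter fun i => e i ≤ e j).card := by
      have : Finset.range (j + 1) ⊆ (Finset.range n).filter fun i => e i ≤ e j := by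
        intro i hi
        simp only [Finset.mem_range] at hi
        simp only [Finset.mem_filter, Finset.mem_range]
        exact ⟨by omega, he (by omega)⟩
      simpa using Finset.card_le_card this
    have h2 : ((Finset.range n).filter fun i => e' i ≤ e j).card ≤ j := by
      have : ((Finset.range n).filter fun i => e' i ≤ e j) ⊆ Finset.range j := by
        intro i hi
        simp only [Finset.mem_filter, Finset.mem_range] at hi ⊢
        by_contra hcon
        have := he' (show j ≤ i by omega)
        omega
      simpa using Finset.card_le_card this
    rw [hle (e j)] at h1
    omega
  rcases Nat.lt_trichotomy (d j) (d' j) with h | h | h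
  · exact absurd h (key d d' hd hd' (cntLe_eq hc))
  · exact h
  · exact absurd h (key d' d hd' hd (fun k => (cntLe_eq hc k).symm))
/-! ### encoding bit vectors as trees -/

def ext (n : ℕ) (b : Fin (n - 2) → Bool) : ℕ → Bool :=
  fun i => if h : 1 ≤ i ∧ i ≤ n - 2 then b ⟨i - 1, by omega⟩ else false

lemma ext_apply (n : ℕ) (b : Fin (n - 2) → Bool) (i : Fin (n - 2)) :
    ext n b (i.val + 1) = b i := by
  have hi := i.isLt
  unfold ext
  rw [dif_pos ⟨by omega, by omega⟩]
  congr 1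

lemma ext_inj {n : ℕ} (hn : 4 < n) {b b' : Fin (n - 2) → Bool}
    (h : ∀ j < n, db (ext n b) j = db (ext n b') j) : b = b' := by
  funext i
  have hi := i.isLt
  have h1 := h (i.val + 1) (by omega)
  have h2 := h (i.val + 1 + 1) (by omega)
  have e1 := db_succ (ext n b) (j := i.val + 1) (by omega)
  have e2 := db_succ (ext n b') (j := i.val + 1) (by omega)
  rw [ext_apply] at e1 e2
  have hite : (if b i then 1 else 0) = (if b' i then 1 else 0) := by omega
  cases hb : b i <;> cases hb' : b' i <;> simp_all

/-! ### the exceptional tree -/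

def pB (j : ℕ) : ℕ := if j ≤ 2 then 0 else if j ≤ 4 then j - 2 else if j = 5 then 3 else j - 1

def dB (j : ℕ) : ℕ := if j = 0 then 0 else if j ≤ 2 then 1 else if j ≤ 4 then 2 else j - 2

lemma pB_le (j : ℕ) : pB j ≤ j := by unfold pB; split_ifs <;> omega

lemma dB_zero_iff {j : ℕ} : dB j = 0 ↔ j = 0 := by unfold dB; split_ifs <;> simp_all <;> omega

lemma dB_mono : Monotone dB := by
  apply monotone_nat_of_le_succ
  intro j
  unfold dB
  split_ifs <;> simp_all <;> omega

lemma dB_pB {j : ℕ} (h : 1 ≤ j) : dB (pB j) = dB j - 1 := by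
  rcases Nat.lt_or_ge j 6 with h6 | h6
  · interval_cases j <;> decide
  · have h1 : pB j = j - 1 := by unfold pB; split_ifs <;> omega
    have h2 : dB (j - 1) = j - 3 := by unfold dB; split_ifs <;> simp_all <;> omega
    have h3 : dB j = j - 2 := by unfold dB; split_ifs <;> simp_all <;> omega
    rw [h1, h2, h3]
    omega

lemma pB_iter_zero : ∀ t j, dB j = t → pB^[t] j = 0 := by
  intro t
  induction t with
  | zero => intro j hj; simpa using dB_zero_iff.mp hj
  | succ t ih =>
    intro j hj
    rw [Function.iterate_succ_apply]
    apply ih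
    have h1 : 1 ≤ j := by by_contra hc; interval_cases j <;> simp_all [dB]
    rw [dB_pB h1]; omega

lemma dB_le_of_iter_zero : ∀ k j, pB^[k] j = 0 → dB j ≤ k := by
  intro k
  induction k with
  | zero => intro j hj; simp at hj; simp [hj, dB]
  | succ k ih =>
    intro j hj
    rw [Function.iterate_succ_apply] at hj
    have h1 := ih _ hj
    rcases Nat.eq_zero_or_pos j with rfl | hpos
    · simp [dB]
    · have := dB_pB hpos
      have hpos' : 1 ≤ dB j := by unfold dB; split_ifs <;> omega
      omega

def treeB {n : ℕ} (hn : 4 < n) : RootedTreeOn n where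
  parent v := ⟨pB v.val, lt_of_le_of_lt (pB_le v.val) v.isLt⟩
  root := ⟨0, by omega⟩
  root_fixed := Fin.ext (by simp [pB])
  reaches_root := by
    have coe : ∀ (k : ℕ) (v : Fin n),
        (((fun v : Fin n => (⟨pB v.val, lt_of_le_of_lt (pB_le v.val) v.isLt⟩ : Fin n))^[k] v) : Fin n).val
        = pB^[k] v.val := by
      intro k
      induction k with
      | zero => intro v; rfl
      | succ k ih => intro v; rw [Function.iterate_succ_apply, Function.iterate_succ_apply]; exact ih _
    intro v
    exact ⟨dB v.val, Fin.ext (by rw [coe]; exact pB_iter_zero _ _ rfl)⟩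

lemma treeB_parent_val {n : ℕ} (hn : 4 < n) (v : Fin n) :
    ((treeB hn).parent v).val = pB v.val := rfl

lemma treeB_iter_val {n : ℕ} (hn : 4 < n) (k : ℕ) (v : Fin n) :
    (((treeB hn).parent)^[k] v).val = pB^[k] v.val := by
  induction k generalizing v with
  | zero => rfl
  | succ k ih => rw [Function.iterate_succ_apply, Function.iterate_succ_apply]; exact ih _

lemma depth_treeB {n : ℕ} (hn : 4 < n) (v : Fin n) : depth (treeB hn) v = dB v.val := by
  unfold depth
  apply le_antisymm
  · apply Nat.find_le
    apply Fin.ext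
    rw [treeB_iter_val]
    exact pB_iter_zero _ _ rfl
  · have hspec := Nat.find_spec ((treeB hn).reaches_root v)
    have := congrArg Fin.val hspec
    rw [treeB_iter_val] at this
    exact dB_le_of_iter_zero _ _ this

lemma pB_inj {w w' : ℕ} (h : pB w = pB w') (h0 : pB w ≠ 0) : w = w' := by
  unfold pB at h h0
  split_ifs at h h0 <;> omega

lemma branchCount_treeB {n : ℕ} (hn : 4 < n) : branchCount (treeB hn) ≤ 1 := by
  unfold branchCount
  have hsub : (Finset.univ.filter fun v : Fin n => 2 ≤ childCount (treeB hn) v)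
      ⊆ {(⟨0, by omega⟩ : Fin n)} := by
    intro v hv
    simp only [Finset.mem_filter, Finset.mem_univ, true_and] at hv
    rw [Finset.mem_singleton]
    by_contra hv0
    have hcc : childCount (treeB hn) v ≤ 1 := by
      apply Finset.card_le_one.mpr
      intro w hw w' hw'
      simp only [childCount, Finset.mem_filter, Finset.mem_univ, true_and] at hw hw'
      apply Fin.ext
      have h1 : pB w.val = v.val := congrArg Fin.val hw.1
      have h2 : pB w'.val = v.val := congrArg Fin.val hw'.1
      have hv0' : v.val ≠ 0 := fun hc => hv0 (Fin.ext hc)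
      exact pB_inj (by omega) (by omega)
    omega
  calc (Finset.univ.filter fun v : Fin n => 2 ≤ childCount (treeB hn) v).card
      ≤ ({(⟨0, by omega⟩ : Fin n)} : Finset (Fin n)).card := Finset.card_le_card hsub
    _ = 1 := Finset.card_singleton _

/-! ### the tree of a bit vector that level-matches the exceptional tree is branchy -/

lemma sInf_eq_one {S : Set ℕ} (h1 : 1 ∈ S) (h0 : 0 ∉ S) : sInf S = 1 := by
  have hle := Nat.sInf_le h1
  have hmem := Nat.sInf_mem (⟨1, h1⟩ : S.Nonempty)
  rcases Nat.eq_zero_or_pos (sInf S) with hc | hc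
  · exact absurd (hc ▸ hmem) h0
  · omega

lemma branchCount_treeOf_of_db_eq_dB {n : ℕ} (hn : 4 < n) (c : ℕ → Bool)
    (hdb : ∀ j < n, db c j = dB j) :
    2 ≤ branchCount (treeOf (show 0 < n by omega) c) := by
  have hpos : (0:ℕ) < n := by omega
  have hdb1 : db c 1 = 1 := db_one c
  have hdb2 : db c 2 = 1 := by rw [hdb 2 (by omega)]; decide
  have hdb3 : db c 3 = 2 := by rw [hdb 3 (by omega)]; decide
  have hdb4 : db c 4 = 2 := by rw [hdb 4 (by omega)]; decide
  have hp1 : parentN c 1 = 0 := parentN_zero_of c (by omega)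
  have hp2 : parentN c 2 = 0 := parentN_zero_of c (by omega)
  have hp3 : parentN c 3 = 1 := by
    unfold parentN
    rw [hdb3]
    exact sInf_eq_one (by simpa using hdb1) (by simp [db_zero])
  have hp4 : parentN c 4 = 1 := by
    unfold parentN
    rw [hdb4]
    exact sInf_eq_one (by simpa using hdb1) (by simp [db_zero])
  set T := treeOf hpos c with hT
  have hchild : ∀ (v w : Fin n), (T.parent w = v ↔ parentN c w.val = v.val) := by
    intro v w
    constructor
    · intro h; exact h ▸ rfl
    · intro h; exact Fin.ext h
  have hcc0 : 2 ≤ childCount T ⟨0, by omega⟩ := by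
    have hsub : ({⟨1, by omega⟩, ⟨2, by omega⟩} : Finset (Fin n))
        ⊆ Finset.univ.filter fun w : Fin n => T.parent w = ⟨0, by omega⟩ ∧ w ≠ ⟨0, by omega⟩ := by
      intro w hw
      simp only [Finset.mem_insert, Finset.mem_singleton] at hw
      simp only [Finset.mem_filter, Finset.mem_univ, true_and]
      rcases hw with rfl | rfl
      · exact ⟨(hchild _ _).mpr hp1, by simp [Fin.ext_iff]⟩
      · exact ⟨(hchild _ _).mpr hp2, by simp [Fin.ext_iff]⟩
    have hcard : ({⟨1, by omega⟩, ⟨2, by omega⟩} : Finset (Fin n)).card = 2 := by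
      rw [Finset.card_insert_of_notMem (by simp [Fin.ext_iff]), Finset.card_singleton]
    calc 2 = _ := hcard.symm
      _ ≤ _ := Finset.card_le_card hsub
  have hcc1 : 2 ≤ childCount T ⟨1, by omega⟩ := by
    have hsub : ({⟨3, by omega⟩, ⟨4, by omega⟩} : Finset (Fin n))
        ⊆ Finset.univ.filter fun w : Fin n => T.parent w = ⟨1, by omega⟩ ∧ w ≠ ⟨1, by omega⟩ := by
      intro w hw
      simp only [Finset.mem_insert, Finset.mem_singleton] at hw
      simp only [Finset.mem_filter, Finset.mem_univ, true_and]
      rcases hw with rfl | rfl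
      · exact ⟨(hchild _ _).mpr hp3, by simp [Fin.ext_iff]⟩
      · exact ⟨(hchild _ _).mpr hp4, by simp [Fin.ext_iff]⟩
    have hcard : ({⟨3, by omega⟩, ⟨4, by omega⟩} : Finset (Fin n)).card = 2 := by
      rw [Finset.card_insert_of_notMem (by simp [Fin.ext_iff]), Finset.card_singleton]
    calc 2 = _ := hcard.symm
      _ ≤ _ := Finset.card_le_card hsub
  unfold branchCount
  have hsub : ({⟨0, by omega⟩, ⟨1, by omega⟩} : Finset (Fin n))
      ⊆ Finset.univ.filter fun v : Fin n => 2 ≤ childCount T v := by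
    intro v hv
    simp only [Finset.mem_insert, Finset.mem_singleton] at hv
    simp only [Finset.mem_filter, Finset.mem_univ, true_and]
    rcases hv with rfl | rfl
    · exact hcc0
    · exact hcc1
  have hcard : ({⟨0, by omega⟩, ⟨1, by omega⟩} : Finset (Fin n)).card = 2 := by
    rw [Finset.card_insert_of_notMem (by simp [Fin.ext_iff]), Finset.card_singleton]
  calc 2 = _ := hcard.symm
    _ ≤ _ := Finset.card_le_card hsub
/-! ### level counts transfer through isomorphisms -/

lemma db_eq_of_iso {n : ℕ} (hpos : 0 < n) (c c' : ℕ → Bool)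
    (h : (treeOf hpos c).Iso (treeOf hpos c')) : ∀ j < n, db c j = db c' j := by
  intro j hj
  refine cnt_det (db_mono c) (db_mono c') (fun k => ?_) hj
  rw [← levelCount_eq _ _ (depth_treeOf hpos c) k, ← levelCount_eq _ _ (depth_treeOf hpos c') k]
  exact levelCount_iso h k

lemma db_eq_dB_of_iso {n : ℕ} (hn : 4 < n) (hpos : 0 < n) (c : ℕ → Bool)
    (h : (treeOf hpos c).Iso (treeB hn)) : ∀ j < n, db c j = dB j := by
  intro j hj
  refine cnt_det (db_mono c) dB_mono (fun k => ?_) hj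
  rw [← levelCount_eq _ _ (depth_treeOf hpos c) k, ← levelCount_eq _ _ (depth_treeB hn) k]
  exact levelCount_iso h k

lemma not_iso_treeB {n : ℕ} (hn : 4 < n) (hpos : 0 < n) (c : ℕ → Bool)
    (h : (treeOf hpos c).Iso (treeB hn)) : False := by
  have hdb := db_eq_dB_of_iso hn hpos c h
  have h2 := branchCount_treeOf_of_db_eq_dB hn c hdb
  have h3 := branchCount_treeB hn
  have h4 := branchCount_iso h
  have h5 : branchCount (treeOf (show 0 < n by omega) c) = branchCount (treeOf hpos c) := rfl
  omega

instance finiteRootedTreeOn (n : ℕ) : Finite (RootedTreeOn n) := by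
  apply Finite.of_injective (fun T : RootedTreeOn n => (T.parent, T.root))
  rintro ⟨p, r, h1, h2⟩ ⟨p', r', h1', h2'⟩ h
  simp only [Prod.mk.injEq] at h
  obtain ⟨hp, hr⟩ := h
  subst hp; subst hr
  rfl

end RTAux

/-- For every `n > 4`, the number of unlabelled rooted trees on `n` nodes exceeds
`2^(n-2)`. -/
theorem numUnlabelledRootedTrees_gt (n : ℕ) (hn : 4 < n) :
    2 ^ (n - 2) < numUnlabelledRootedTrees n := by
  classical
  have hpos : 0 < n := by omega
  set f : ((Fin (n - 2) → Bool) ⊕ Unit) → Quotient (rootedTreeSetoid n) :=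
    Sum.elim (fun b => Quotient.mk (rootedTreeSetoid n) (RTAux.treeOf hpos (RTAux.ext n b)))
      (fun _ => Quotient.mk (rootedTreeSetoid n) (RTAux.treeB hn)) with hf
  have hinj : Function.Injective f := by
    rintro (b | u) (b' | u') h
    · have hiso : RootedTreeOn.Iso (RTAux.treeOf hpos (RTAux.ext n b))
          (RTAux.treeOf hpos (RTAux.ext n b')) := Quotient.exact h
      have := RTAux.ext_inj hn (RTAux.db_eq_of_iso hpos _ _ hiso)
      rw [this]
    · exact absurd (Quotient.exact h) (fun hiso => RTAux.not_iso_treeB hn hpos _ hiso)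
    · have hiso : RootedTreeOn.Iso (RTAux.treeB hn) (RTAux.treeOf hpos (RTAux.ext n b')) :=
        Quotient.exact h
      exact absurd ((rootedTreeSetoid n).symm hiso) (fun h' => RTAux.not_iso_treeB hn hpos _ h')
    · rfl
  have hle : Nat.card ((Fin (n - 2) → Bool) ⊕ Unit) ≤ Nat.card (Quotient (rootedTreeSetoid n)) :=
    Nat.card_le_card_of_injective f hinj
  have hcard : Nat.card ((Fin (n - 2) → Bool) ⊕ Unit) = 2 ^ (n - 2) + 1 := by
    rw [Nat.card_sum]
    simp [Nat.card_eq_fintype_card]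
  unfold numUnlabelledRootedTrees
  omega
end

section
/- Let Γ be a simple graph on vertex set V and I ⊆ V. Then the building set of the contraction graph equals the contraction of the graphical building set: B(Γ/I) = B(Γ)/I. -/
/-- The graphical building set of a simple graph `G`: all (nonempty) vertex sets
`S` inducing a connected subgraph. -/
def graphBuilding {V : Type*} (G : SimpleGraph V) : Set (Set V) :=
  {S | (G.induce S).Connected}

/-- The contraction `B/I`: nonempty subsets `J` of `V \ I` with `J ∈ B` or
`I' ∪ J ∈ B` for some `I' ⊆ I`. -/
def contractBS {V : Type*} (B : Set (Set V)) (I : Set V) : Set (Set V) :=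
  {J | J ⊆ Iᶜ ∧ J.Nonempty ∧ (J ∈ B ∨ ∃ I' ⊆ I, I' ∪ J ∈ B)}

/-- The contraction `Γ/I`: the graph on `V \ I` where two distinct vertices are
adjacent iff they are joined in `Γ` by an edge or a path whose internal vertices
all lie in `I` (i.e. by a walk whose support is contained in `{u, v} ∪ I`). -/
def contractGraph {V : Type*} (G : SimpleGraph V) (I : Set V) : SimpleGraph ↥(Iᶜ) :=
  SimpleGraph.fromRel (fun u v =>
    ∃ p : G.Walk u v, ∀ w ∈ p.support, w = (u : V) ∨ w = (v : V) ∨ w ∈ I)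

/-!
A connected `T ⊆ V \ I` in `Γ/I` lifts to a connected set `C` with `T ⊆ C ⊆ I ∪ T` in `Γ`,
by gluing together the `Γ`-walks realising the edges of `Γ/I`; then `C = (C ∩ I) ∪ T`.
Conversely, if `I' ∪ J` is connected with `I' ⊆ I`, walk inside it from `a ∈ J` and remember
the last vertex of `J` visited: the walk since then runs through `I`, so that vertex is joined
to the next vertex of `J` by an edge of `Γ/I`.
-/

namespace SimpleGraph

variable {V : Type*} {G : SimpleGraph V}

theorem exists_induce_connected_superset {S J : Set V} {u : V} (hu : u ∈ J)
    (h : ∀ v ∈ J, ∃ s ⊆ S, u ∈ s ∧ v ∈ s ∧ (G.induce s).Connected) :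
    ∃ C ⊆ S, J ⊆ C ∧ (G.induce C).Connected := by
  let 𝒮 := {s | s ⊆ S ∧ u ∈ s ∧ (G.induce s).Connected}
  refine ⟨⋃₀ 𝒮, Set.sUnion_subset fun s hs => hs.1, fun v hv => ?_, ?_⟩
  · obtain ⟨s, hsS, hus, hvs, hs⟩ := h v hv
    exact Set.mem_sUnion_of_mem hvs ⟨hsS, hus, hs⟩
  · obtain ⟨s, hsS, hus, -, hs⟩ := h u hu
    exact induce_sUnion_connected_of_pairwise_not_disjoint ⟨s, hsS, hus, hs⟩
      (fun hs ht => ⟨u, hs.2.1, ht.2.1⟩) (fun hs => hs.2.2)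

variable (G) in
def JoinedVia (I : Set V) (u v : V) : Prop :=
  ∃ p : G.Walk u v, ∀ w ∈ p.support, w = u ∨ w = v ∨ w ∈ I

namespace JoinedVia

variable {I : Set V} {u v x : V}

theorem refl : G.JoinedVia I u u :=
  ⟨Walk.nil, fun _ hw => Or.inl (Walk.mem_support_nil_iff.1 hw)⟩

theorem symm (h : G.JoinedVia I u v) : G.JoinedVia I v u := by
  obtain ⟨p, hp⟩ := h
  refine ⟨p.reverse, fun w hw => ?_⟩
  rw [Walk.support_reverse, List.mem_reverse] at hw
  rcases hp w hw with hu | hv | hI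
  exacts [Or.inr (Or.inl hu), Or.inl hv, Or.inr (Or.inr hI)]

theorem of_adj (h : G.Adj u v) : G.JoinedVia I u v :=
  ⟨h.toWalk, fun w hw => by
    simp only [Walk.support_cons, Walk.support_nil, List.mem_cons, List.not_mem_nil,
      or_false] at hw
    exact hw.imp_right Or.inl⟩

theorem concat (h : G.JoinedVia I u x) (hx : x ∈ I) (hxv : G.Adj x v) : G.JoinedVia I u v := by
  obtain ⟨p, hp⟩ := h
  refine ⟨p.concat hxv, fun w hw => ?_⟩
  rw [Walk.support_concat, List.mem_append, List.mem_singleton] at hw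
  rcases hw with hw | rfl
  · rcases hp w hw with hu | rfl | hI
    exacts [Or.inl hu, Or.inr (Or.inr hx), Or.inr (Or.inr hI)]
  · exact Or.inr (Or.inl rfl)

theorem exists_induce_connected {S : Set V} (h : G.JoinedVia I u v) (hu : u ∈ S) (hv : v ∈ S)
    (hI : I ⊆ S) : ∃ s ⊆ S, u ∈ s ∧ v ∈ s ∧ (G.induce s).Connected := by
  obtain ⟨p, hp⟩ := h
  refine ⟨{w | w ∈ p.support}, fun w hw => ?_, p.start_mem_support, p.end_mem_support,
    p.connected_induce_support⟩
  rcases hp w hw with rfl | rfl | hw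
  exacts [hu, hv, hI hw]

end JoinedVia

theorem contractGraph_adj {I : Set V} {u v : ↥Iᶜ} :
    (contractGraph G I).Adj u v ↔ u ≠ v ∧ G.JoinedVia I u v := by
  rw [contractGraph, fromRel_adj]
  exact and_congr_right fun _ => ⟨fun h => h.elim id JoinedVia.symm, Or.inl⟩

theorem JoinedVia.reachable_contractGraph_induce {I : Set V} {T : Set ↥Iᶜ} {a b : T}
    (h : G.JoinedVia I a.1 b.1) : ((contractGraph G I).induce T).Reachable a b := by
  rcases eq_or_ne a b with rfl | hab
  · rfl
  · exact Adj.reachable (induce_adj.2 (contractGraph_adj.2 ⟨Subtype.coe_ne_coe.2 hab, h⟩))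

theorem exists_union_induce_connected_of_contractGraph {I : Set V} {T : Set ↥Iᶜ}
    (h : ((contractGraph G I).induce T).Connected) :
    ∃ I' ⊆ I, (G.induce (I' ∪ Subtype.val '' T)).Connected := by
  obtain ⟨t₀⟩ := h.nonempty
  have hT : ∀ t : T, t.1.1 ∈ I ∪ Subtype.val '' T := fun t => Or.inr ⟨t.1, t.2, rfl⟩
  have hjoin : ∀ t : T, ∃ s ⊆ I ∪ Subtype.val '' T, t₀.1.1 ∈ s ∧ t.1.1 ∈ s ∧
      (G.induce s).Connected := by
    intro t
    have ht := (reachable_iff_reflTransGen _ _).1 (h.preconnected t₀ t)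
    induction ht with
    | refl => exact JoinedVia.refl.exists_induce_connected (hT t₀) (hT t₀) Set.subset_union_left
    | @tail a c _ hac ih =>
      obtain ⟨s, hs, ht₀s, has, hsconn⟩ := ih
      have hac' : G.JoinedVia I a.1 c.1 := (contractGraph_adj.1 (induce_adj.1 hac)).2
      obtain ⟨s', hs', has', hcs', hs'conn⟩ :=
        hac'.exists_induce_connected (hT a) (hT c) Set.subset_union_left
      exact ⟨s ∪ s', Set.union_subset hs hs', Or.inl ht₀s, Or.inr hcs',
        induce_union_connected hsconn.preconnected hs'conn.preconnected ⟨_, has, has'⟩⟩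
  obtain ⟨C, hCS, hTC, hC⟩ := exists_induce_connected_superset (S := I ∪ Subtype.val '' T)
    (J := Subtype.val '' T) ⟨t₀.1, t₀.2, rfl⟩ (by rintro _ ⟨t, ht, rfl⟩; exact hjoin ⟨t, ht⟩)
  have hC_eq : C ∩ I ∪ Subtype.val '' T = C :=
    (Set.union_subset Set.inter_subset_left hTC).antisymm
      fun x hx => (hCS hx).imp (⟨hx, ·⟩) id
  exact ⟨C ∩ I, Set.inter_subset_right, by rwa [hC_eq]⟩

theorem contractGraph_induce_preimage_connected {I I' J : Set V} (hJ : J ⊆ Iᶜ)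
    (hJne : J.Nonempty) (hI' : I' ⊆ I) (h : (G.induce (I' ∪ J)).Connected) :
    ((contractGraph G I).induce (Subtype.val ⁻¹' J : Set ↥Iᶜ)).Connected := by
  let H := (contractGraph G I).induce (Subtype.val ⁻¹' J : Set ↥Iᶜ)
  have hlast : ∀ (a : ↥(Subtype.val ⁻¹' J : Set ↥Iᶜ)) (x : ↥(I' ∪ J)),
      (G.induce (I' ∪ J)).Reachable ⟨a.1.1, Or.inr a.2⟩ x →
        ∃ y, H.Reachable a y ∧ G.JoinedVia I y.1.1 x.1 := by
    intro a x hx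
    rw [reachable_iff_reflTransGen] at hx
    induction hx with
    | refl => exact ⟨a, .rfl, JoinedVia.refl⟩
    | @tail x z _ hxz ih =>
      obtain ⟨y, hay, hyx⟩ := ih
      rcases x.2 with hxI | hxJ
      · exact ⟨y, hay, hyx.concat (hI' hxI) hxz⟩
      · exact ⟨⟨⟨x, hJ hxJ⟩, hxJ⟩, hay.trans hyx.reachable_contractGraph_induce,
          JoinedVia.of_adj hxz⟩
  obtain ⟨j, hj⟩ := hJne
  refine (connected_iff _).2 ⟨fun a b => ?_, ⟨⟨⟨j, hJ hj⟩, hj⟩⟩⟩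
  obtain ⟨y, hay, hyb⟩ := hlast a ⟨b.1.1, Or.inr b.2⟩ (h.preconnected _ _)
  exact hay.trans hyb.reachable_contractGraph_induce

end SimpleGraph

/-- `B(Γ/I) = B(Γ)/I`: the graphical building set of the contraction graph equals
the contraction of the graphical building set. -/
theorem graphBuilding_contract {V : Type*} (G : SimpleGraph V) (I : Set V) :
    (fun T : Set ↥(Iᶜ) => (Subtype.val '' T : Set V)) '' graphBuilding (contractGraph G I) =
      contractBS (graphBuilding G) I := by
  ext J
  constructor
  · rintro ⟨T, hT, rfl⟩
    obtain ⟨t₀⟩ := hT.nonempty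
    exact ⟨Subtype.coe_image_subset _ T, ⟨t₀.1.1, t₀.1, t₀.2, rfl⟩,
      Or.inr (SimpleGraph.exists_union_induce_connected_of_contractGraph hT)⟩
  · rintro ⟨hJ, hJne, hB⟩
    obtain ⟨I', hI', hconn⟩ : ∃ I' ⊆ I, (G.induce (I' ∪ J)).Connected :=
      hB.elim (fun h => ⟨∅, Set.empty_subset I, by rwa [Set.empty_union]⟩) id
    refine ⟨_, SimpleGraph.contractGraph_induce_preimage_connected hJ hJne hI' hconn, ?_⟩
    exact Set.image_preimage_eq_of_subset (by rwa [Subtype.range_coe])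
end

section
/- Let Γ be a graph on n vertices and let α, β be compositions of n such that β refines α (β is obtained by splitting some parts of α into consecutive pieces). Then the number of ordered colorings of Γ of type α is at most the number of ordered colorings of type β: ζ_α(Γ) ≤ ζ_β(Γ). -/
/-!
Split every colour class of an ordered colouring of type `α` arbitrarily into consecutive new
colours whose class sizes are the parts of `β` refining the corresponding part of `α`. The old
colouring is the new one followed by a monotone map of colours, so the lifts of distinct
colourings are distinct. The lift is again ordered: a forbidden walk for it joins two vertices of
the same old colour through vertices of old colour at most that colour, and cutting such a walk at
the first internal vertex of that colour gives a forbidden walk for the old colouring.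
-/

/-- `lam` is an ordered coloring of `G`: no two distinct vertices of the same
color are joined by a walk all of whose internal vertices have strictly smaller
colors. -/
def IsOrderedColoring {V C : Type*} [LinearOrder C] (G : SimpleGraph V)
    (lam : V → C) : Prop :=
  ∀ u v : V, u ≠ v → lam u = lam v →
    ¬ ∃ p : G.Walk u v, ∀ w ∈ p.support, w = u ∨ w = v ∨ lam w < lam u

/-- `ζ_α(Γ)`: the number of ordered colorings of `Γ` of type the composition `α`
(given as a list of part sizes, in increasing color order). -/
noncomputable def zetaL {V : Type*} [Fintype V] (G : SimpleGraph V)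
    (α : List ℕ) : ℕ :=
  Nat.card {lam : V → Fin α.length // IsOrderedColoring G lam ∧
    ∀ j : Fin α.length, Nat.card {v : V // lam v = j} = α.get j}

/-- `β` refines `α`: `β` is obtained by splitting each part of `α` into
consecutive pieces. -/
def RefinesComp (β α : List ℕ) : Prop :=
  ∃ L : List (List ℕ), α = L.map List.sum ∧ β = L.flatten

namespace IsOrderedColoring

variable {V C D : Type*} [LinearOrder C] [LinearOrder D] {G : SimpleGraph V}

theorem not_forall_le {c : V → C} (hc : IsOrderedColoring G c) {u v : V} (huv : u ≠ v)
    (h : c u = c v) (p : G.Walk u v) : ¬ ∀ w ∈ p.support, c w ≤ c u := by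
  classical
  induction hn : p.length using Nat.strong_induction_on generalizing v with
  | _ n ih =>
  intro hle
  by_cases hlt : ∀ w ∈ p.support, w = u ∨ w = v ∨ c w < c u
  · exact hc u v huv h ⟨p, hlt⟩
  push Not at hlt
  obtain ⟨w, hw, hwu, hwv, hcw⟩ := hlt
  -- `w` has the colour of `u`, so the shorter walk from `u` to `w` is already forbidden
  exact ih _ (hn ▸ p.length_takeUntil_lt_length hw hwv) (Ne.symm hwu)
    (le_antisymm hcw (hle w hw)) (p.takeUntil w hw) rfl
    fun x hx => hle x (p.support_takeUntil_subset_support hw hx)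

theorem of_comp {g : D → C} (hg : Monotone g) {c : V → D}
    (h : IsOrderedColoring G (g ∘ c)) : IsOrderedColoring G c := by
  rintro u v huv hc ⟨p, hp⟩
  refine h.not_forall_le huv (congrArg g hc) p fun w hw => ?_
  rcases hp w hw with rfl | rfl | hlt
  · exact le_rfl
  · exact (congrArg g hc).ge
  · exact hg hlt.le

end IsOrderedColoring

theorem exists_lift_card_fiber {V A B : Type*} [Finite V] [Fintype B] [DecidableEq A]
    (f : V → A) (g : B → A) (s : B → ℕ)
    (h : ∀ a, Nat.card {v // f v = a} = ∑ b with g b = a, s b) :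
    ∃ c : V → B, g ∘ c = f ∧ ∀ b, Nat.card {v // c v = b} = s b := by
  have hfiber : ∀ a, Nonempty ({v // f v = a} ≃ {t : Σ b, Fin (s b) // g t.1 = a}) := by
    intro a
    rw [← Finite.card_eq, h,
      Nat.card_congr (Equiv.subtypeSigmaEquiv (fun b => Fin (s b)) (g · = a)), Nat.card_sigma,
      Finset.sum_subtype (p := (g · = a)) (F := inferInstance) _ (by simp)]
    simp
  let e := Equiv.ofFiberEquiv fun a => (hfiber a).some
  refine ⟨fun v => (e v).1, funext (Equiv.ofFiberEquiv_map fun a => (hfiber a).some),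
    fun b => ?_⟩
  rw [Nat.card_congr (e.subtypeEquiv (q := (·.1 = b)) fun _ => Iff.rfl),
    Nat.card_congr (Equiv.sigmaSubtype b)]
  simp

/-- Monotonicity makes the fibres of `g` intervals, so `β` is cut into consecutive blocks
summing to the parts of `α`. -/
def IsMerging (β α : List ℕ) (g : Fin β.length → Fin α.length) : Prop :=
  Monotone g ∧ ∀ i, ∑ j with g j = i, β[j] = α[i]

theorem IsMerging.cons_append {β α : List ℕ} {g : Fin β.length → Fin α.length}
    (hg : IsMerging β α g) (l : List ℕ) :
    ∃ g' : Fin (l ++ β).length → Fin (l.sum :: α).length,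
      IsMerging (l ++ β) (l.sum :: α) g' := by
  have hlen : (l ++ β).length = l.length + β.length := List.length_append
  let g' (j : Fin (l ++ β).length) : Fin (l.sum :: α).length :=
    if h : j.1 < l.length then 0 else (g ⟨j - l.length, by omega⟩).succ
  refine ⟨g', fun j k hjk => ?_, fun i => ?_⟩
  · rw [Fin.le_def] at hjk
    simp only [g']
    split_ifs with hj hk hk
    · exact le_rfl
    · exact Fin.zero_le _
    · omega
    · exact Fin.succ_le_succ_iff.mpr (hg.1 (Fin.mk_le_mk.mpr (by omega)))
  · rw [Finset.sum_filter, ← Fin.sum_congr' _ hlen.symm, Fin.sum_univ_add]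
    simp only [g', Fin.val_cast, Fin.val_castAdd, Fin.val_natAdd, Fin.is_lt, ↓reduceDIte,
      add_lt_iff_neg_left, not_lt_zero, add_tsub_cancel_left, Fin.eta, Fin.getElem_fin,
      List.getElem_append_left, List.getElem_append_right, le_add_iff_nonneg_right, zero_le,
      Finset.sum_ite_irrel, Fin.sum_univ_getElem, Finset.sum_const_zero]
    cases i using Fin.cases with
    | zero => simp [Fin.succ_ne_zero]
    | succ i => simpa [(Fin.succ_ne_zero i).symm, ← Finset.sum_filter] using hg.2 i

theorem RefinesComp.exists_isMerging {β α : List ℕ} (h : RefinesComp β α) :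
    ∃ g, IsMerging β α g := by
  obtain ⟨L, rfl, rfl⟩ := h
  induction L with
  | nil => exact ⟨finZeroElim, fun j => j.elim0, fun i => i.elim0⟩
  | cons l L ih =>
    obtain ⟨g, hg⟩ := ih
    exact hg.cons_append l

theorem zetaL_le_of_isMerging {V : Type*} [Fintype V] (G : SimpleGraph V) {β α : List ℕ}
    {g : Fin β.length → Fin α.length} (hg : IsMerging β α g) : zetaL G α ≤ zetaL G β := by
  have lift : ∀ c : {c : V → Fin α.length // IsOrderedColoring G c ∧
      ∀ i, Nat.card {v // c v = i} = α.get i},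
      ∃ c' : {c : V → Fin β.length // IsOrderedColoring G c ∧
        ∀ j, Nat.card {v // c v = j} = β.get j}, g ∘ c'.1 = c.1 := by
    rintro ⟨c, hc, hcard⟩
    obtain ⟨c', hgc', hcard'⟩ :=
      exists_lift_card_fiber c g (β[·]) fun i => (hcard i).trans (hg.2 i).symm
    exact ⟨⟨c', IsOrderedColoring.of_comp hg.1 (hgc' ▸ hc), hcard'⟩, hgc'⟩
  choose F hF using lift
  exact Nat.card_le_card_of_injective F fun c d hcd => Subtype.ext (by rw [← hF c, ← hF d, hcd])

theorem zeta_mono_refines_general {V : Type*} [Fintype V] (G : SimpleGraph V)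
    (α β : List ℕ) (href : RefinesComp β α) :
    zetaL G α ≤ zetaL G β := by
  obtain ⟨g, hg⟩ := href.exists_isMerging
  exact zetaL_le_of_isMerging G hg

/-- If `β` refines `α` then `ζ_α(Γ) ≤ ζ_β(Γ)`. -/
theorem zeta_mono_refines {V : Type*} [Fintype V] (G : SimpleGraph V)
    (α β : List ℕ) (hα : ∀ x ∈ α, 0 < x) (hβ : ∀ x ∈ β, 0 < x)
    (hsum : α.sum = Fintype.card V) (href : RefinesComp β α) :
    zetaL G α ≤ zetaL G β :=
  zeta_mono_refines_general G α β href
end
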